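/- Let P(s) = \sum_{k=1}^m a_k k^{-s} with a_1 \neq 0, r \in \mathbb{R}, and suppose P has a zero \rho = r + \delta + it_0 with \delta > 0. Then for every n, d_{n,r}^2 \ge 2\delta / |\rho - r + 1/2|^2, where d_{n,r} is the L^2(0,\infty) distance from \mathbf{1}_{(0,1)} to span\{\kappa_r(1/(kx)) : k = 1,\ldots,n\} and \kappa_r(x) = \sum_{k \le x} a_k k^{-(r-1/2)}. -/

import Mathlib

open Finset Filter Topology MeasureTheory

/-- `κ_r(x) = ∑_{1 ≤ k ≤ x} a_k k^{-(r-1/2)}` -/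
noncomputable def kappa (a : ℕ → ℂ) (r : ℝ) (x : ℝ) : ℂ :=
  ∑ k ∈ Finset.Icc 1 ⌊x⌋₊, a k / (k : ℂ) ^ ((r : ℂ) - 1/2)

/-- The square of the Báez-Duarte distance `d_{n,r}`: the squared `L²(0,∞)` distance from the
indicator of `(0,1)` to the span of `x ↦ κ_r(1/(kx))`, `k = 1, …, n`. -/
noncomputable def baezDuarteDistSq (a : ℕ → ℂ) (r : ℝ) (n : ℕ) : ℝ :=
  ⨅ b : Fin n → ℂ, ∫ x in Set.Ioi (0 : ℝ),
    ‖Set.indicator (Set.Ioo (0 : ℝ) 1) (fun _ => (1 : ℂ)) x -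
      ∑ k : Fin n, b k * kappa a r (1 / (((k : ℕ) + 1 : ℕ) * x))‖ ^ 2

/-!
Put `w = ρ - r - 1/2` and `h(x) = x ^ w` on `(0, 1]`. Since `κ_r(1/(kx))` is a step function
jumping by `a_j j^{1/2-r}` at `x = 1/(jk)`, one computes
`∫ κ_r(1/(kx)) h(x) dx = P(ρ) k^{-(ρ-r+1/2)} / (ρ-r+1/2)`, which vanishes at a zero `ρ` of `P`.
So `h` annihilates the whole span, while `∫ 𝟙_{(0,1)} h = 1/(ρ-r+1/2)` and
`∫ |h|² = 1/(2δ)` with `δ = Re ρ - r > 0`. Cauchy–Schwarz applied to `h` and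
`𝟙_{(0,1)} - ∑ b_k κ_r(1/(kx))` gives `|ρ-r+1/2|⁻² ≤ d² / (2δ)` for every choice of `b`.
-/

section L2Pairing

variable {α 𝕜 : Type*} [MeasurableSpace α] {μ : Measure α} [RCLike 𝕜]

theorem setIntegral_indicator_const_mul {s : Set α} (hs : MeasurableSet s) (t : Set α) (z : 𝕜)
    (f : α → 𝕜) :
    ∫ x in t, s.indicator (fun _ => z) x * f x ∂μ = z * ∫ x in t ∩ s, f x ∂μ := by
  have hmul : ∀ x, s.indicator (fun _ => z) x * f x = s.indicator (fun x => z * f x) x :=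
    fun x => (Set.indicator_mul_left s (fun _ => z) f).symm
  simp_rw [hmul]
  rw [setIntegral_indicator hs, integral_const_mul]

theorem sq_norm_integral_mul_le {f g : α → 𝕜} (hf : MemLp f 2 μ) (hg : MemLp g 2 μ) :
    ‖∫ x, f x * g x ∂μ‖ ^ 2 ≤ (∫ x, ‖f x‖ ^ 2 ∂μ) * ∫ x, ‖g x‖ ^ 2 ∂μ := by
  have hHolder := integral_mul_norm_le_Lp_mul_Lq Real.HolderConjugate.two_two
    (by simpa using hf) (by simpa using hg)
  simp only [Real.rpow_two, ← Real.sqrt_eq_rpow] at hHolder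
  have hF : 0 ≤ ∫ x, ‖f x‖ ^ 2 ∂μ := integral_nonneg fun _ => by positivity
  have hG : 0 ≤ ∫ x, ‖g x‖ ^ 2 ∂μ := integral_nonneg fun _ => by positivity
  calc ‖∫ x, f x * g x ∂μ‖ ^ 2
      ≤ (√(∫ x, ‖f x‖ ^ 2 ∂μ) * √(∫ x, ‖g x‖ ^ 2 ∂μ)) ^ 2 := by
        gcongr
        refine ((norm_integral_le_integral_norm _).trans_eq ?_).trans hHolder
        simp only [norm_mul]
    _ = (∫ x, ‖f x‖ ^ 2 ∂μ) * ∫ x, ‖g x‖ ^ 2 ∂μ := by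
        rw [mul_pow, Real.sq_sqrt hF, Real.sq_sqrt hG]

theorem sq_norm_integral_mul_le_of_orthogonal {ι : Type*} (s : Finset ι) {e h : α → 𝕜}
    {φ : ι → α → 𝕜} (he : MemLp e 2 μ) (hφ : ∀ i ∈ s, MemLp (φ i) 2 μ) (hh : MemLp h 2 μ)
    (horth : ∀ i ∈ s, ∫ x, φ i x * h x ∂μ = 0) (b : ι → 𝕜) :
    ‖∫ x, e x * h x ∂μ‖ ^ 2 ≤
      (∫ x, ‖e x - ∑ i ∈ s, b i * φ i x‖ ^ 2 ∂μ) * ∫ x, ‖h x‖ ^ 2 ∂μ := by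
  have hspan : MemLp (fun x => ∑ i ∈ s, b i * φ i x) 2 μ :=
    memLp_finsetSum s fun i hi => (hφ i hi).const_mul (b i)
  have hpair : ∫ x, (e x - ∑ i ∈ s, b i * φ i x) * h x ∂μ = ∫ x, e x * h x ∂μ := by
    have hφh : ∀ i ∈ s, Integrable (fun x => b i * (φ i x * h x)) μ := fun i hi =>
      ((hφ i hi).integrable_mul hh).const_mul (b i)
    have heh : Integrable (fun x => e x * h x) μ := he.integrable_mul hh
    simp only [sub_mul, Finset.sum_mul, mul_assoc]
    rw [integral_sub heh (integrable_finsetSum s hφh), integral_finsetSum s hφh]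
    simp only [integral_const_mul]
    rw [Finset.sum_eq_zero fun i hi => by rw [horth i hi, mul_zero], sub_zero]
  rw [← hpair]
  exact sq_norm_integral_mul_le (he.sub hspan) hh

end L2Pairing

section TruncatedPower

/-- With `w = ρ - r - 1/2` this is the complex conjugate of the paper's test function `f`; the
pairings `∫ φ h` below are bilinear, so no conjugation is needed. -/
noncomputable def truncCpow (w : ℂ) : ℝ → ℂ :=
  (Set.Ioc 0 1).indicator fun x => (x : ℂ) ^ w

variable {w : ℂ}

theorem integral_Ioc_cpow (hw : -1 < w.re) {c : ℝ} (hc : 0 ≤ c) :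
    ∫ x in Set.Ioc 0 c, (x : ℂ) ^ w = (c : ℂ) ^ (w + 1) / (w + 1) := by
  have hw1 : w + 1 ≠ 0 := fun h => by
    have := congrArg Complex.re h
    simp only [Complex.add_re, Complex.one_re, Complex.zero_re] at this
    linarith
  rw [← intervalIntegral.integral_of_le hc, integral_cpow (Or.inl hw), Complex.ofReal_zero,
    Complex.zero_cpow hw1, sub_zero]

theorem measurable_truncCpow (w : ℂ) : Measurable (truncCpow w) :=
  (Complex.measurable_ofReal.pow_const w).indicator measurableSet_Ioc

theorem integrable_truncCpow (hw : -1 < w.re) : Integrable (truncCpow w) := by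
  rw [truncCpow, integrable_indicator_iff measurableSet_Ioc]
  exact (intervalIntegral.intervalIntegrable_cpow' hw).1

theorem setIntegral_Ioc_truncCpow (hw : -1 < w.re) {c : ℝ} (hc0 : 0 ≤ c) (hc1 : c ≤ 1) :
    ∫ x in Set.Ioc 0 c, truncCpow w x = (c : ℂ) ^ (w + 1) / (w + 1) := by
  rw [← integral_Ioc_cpow hw hc0]
  refine setIntegral_congr_fun measurableSet_Ioc fun x hx => ?_
  exact Set.indicator_of_mem (Set.Ioc_subset_Ioc_right hc1 hx) _

theorem sq_norm_truncCpow (w : ℂ) (x : ℝ) :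
    ‖truncCpow w x‖ ^ 2 = (Set.Ioc 0 1).indicator (fun x : ℝ => x ^ (2 * w.re)) x := by
  by_cases hx : x ∈ Set.Ioc 0 1
  · rw [truncCpow, Set.indicator_of_mem hx, Set.indicator_of_mem hx,
      Complex.norm_cpow_eq_rpow_re_of_pos hx.1, ← Real.rpow_natCast, ← Real.rpow_mul hx.1.le]
    ring_nf
  · simp [truncCpow, Set.indicator_of_notMem hx]

theorem integral_sq_norm_truncCpow (hw : -1 / 2 < w.re) :
    ∫ x in Set.Ioi 0, ‖truncCpow w x‖ ^ 2 = 1 / (2 * w.re + 1) := by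
  simp_rw [sq_norm_truncCpow]
  rw [setIntegral_indicator measurableSet_Ioc, Set.inter_eq_right.mpr Set.Ioc_subset_Ioi_self,
    ← intervalIntegral.integral_of_le zero_le_one, integral_rpow (Or.inl (by linarith)),
    Real.one_rpow, Real.zero_rpow (by linarith)]
  ring

theorem memLp_truncCpow (hw : -1 / 2 < w.re) :
    MemLp (truncCpow w) 2 (volume.restrict (Set.Ioi 0)) := by
  refine (memLp_two_iff_integrable_sq_norm (measurable_truncCpow w).aestronglyMeasurable).2 ?_
  simp_rw [sq_norm_truncCpow]
  refine (integrable_indicator_iff measurableSet_Ioc).2 ?_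
  exact (intervalIntegral.intervalIntegrable_rpow' (by linarith)).1.restrict

theorem setIntegral_indicator_Ioo_mul_truncCpow {w : ℂ} (hw : -1 < w.re) :
    ∫ x in Set.Ioi 0, (Set.Ioo 0 1).indicator (fun _ => (1 : ℂ)) x * truncCpow w x =
      1 / (w + 1) := by
  rw [setIntegral_indicator_const_mul measurableSet_Ioo,
    Set.inter_eq_right.2 Set.Ioo_subset_Ioi_self, ← integral_Ioc_eq_integral_Ioo,
    setIntegral_Ioc_truncCpow hw zero_le_one le_rfl, Complex.ofReal_one, Complex.one_cpow,
    one_mul]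

end TruncatedPower

theorem ofReal_one_div_natCast_mul_cpow (j k : ℕ) (u : ℂ) :
    ((1 / (j * k : ℝ) : ℝ) : ℂ) ^ u = ((j : ℂ) ^ u)⁻¹ * ((k : ℂ) ^ u)⁻¹ := by
  have harg : ((j : ℂ) * k).arg ≠ Real.pi := by
    rw [← Nat.cast_mul, Complex.natCast_arg]; exact Real.pi_ne_zero.symm
  push_cast
  rw [one_div, ← mul_inv, ← Complex.natCast_mul_natCast_cpow, Complex.inv_cpow _ _ harg]

section Kappa

variable {m : ℕ} {a : ℕ → ℂ} {r : ℝ}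

theorem kappa_eq_sum_ite (ha : ∀ k, m < k → a k = 0) {y : ℝ} (hy : 0 ≤ y) :
    kappa a r y = ∑ j ∈ Icc 1 m, if (j : ℝ) ≤ y then a j / (j : ℂ) ^ ((r : ℂ) - 1/2) else 0 := by
  rw [kappa, ← Finset.sum_filter]
  refine (Finset.sum_subset (fun j hj => ?_) fun j hj hjm => ?_).symm
  · simp only [Finset.mem_filter, Finset.mem_Icc] at hj ⊢
    exact ⟨hj.1.1, Nat.le_floor hj.2⟩
  · simp only [Finset.mem_filter, Finset.mem_Icc, not_and, not_le] at hj hjm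
    have hjy : (j : ℝ) ≤ y := (Nat.le_floor_iff hy).1 hj.2
    by_cases hj' : j ≤ m
    · exact absurd hjy (not_le.2 (hjm ⟨hj.1, hj'⟩))
    · rw [ha j (not_le.1 hj'), zero_div]

theorem kappa_one_div_mul_eq_sum_indicator (ha : ∀ k, m < k → a k = 0) {k : ℕ} (hk : 1 ≤ k)
    {x : ℝ} (hx : 0 < x) :
    kappa a r (1 / (k * x)) = ∑ j ∈ Icc 1 m,
      (Set.Ioc 0 (1 / (j * k : ℝ))).indicator (fun _ => a j / (j : ℂ) ^ ((r : ℂ) - 1/2)) x := by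
  have hkx : 0 < (k : ℝ) * x := mul_pos (by exact_mod_cast hk) hx
  rw [kappa_eq_sum_ite ha (by positivity)]
  refine Finset.sum_congr rfl fun j hj => ?_
  have hj : (0 : ℝ) < j := by exact_mod_cast (Finset.mem_Icc.1 hj).1
  have hiff : (j : ℝ) ≤ 1 / (k * x) ↔ x ≤ 1 / (j * k) := by
    rw [le_div_iff₀ hkx, le_div_iff₀ (by positivity)]
    ring_nf
  simp only [Set.indicator, Set.mem_Ioc, hx, true_and, hiff]

theorem memLp_kappa_one_div_mul (ha : ∀ k, m < k → a k = 0) {k : ℕ} (hk : 1 ≤ k) :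
    MemLp (fun x => kappa a r (1 / (k * x))) 2 (volume.restrict (Set.Ioi 0)) := by
  have hstep : (fun x => kappa a r (1 / (k * x))) =ᵐ[volume.restrict (Set.Ioi 0)]
      fun x => ∑ j ∈ Icc 1 m,
        (Set.Ioc 0 (1 / (j * k : ℝ))).indicator (fun _ => a j / (j : ℂ) ^ ((r : ℂ) - 1/2)) x := by
    filter_upwards [self_mem_ae_restrict measurableSet_Ioi] with x hx
    exact kappa_one_div_mul_eq_sum_indicator ha hk hx
  refine MemLp.ae_eq hstep.symm (memLp_finsetSum _ fun j _ => ?_)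
  exact memLp_indicator_const 2 measurableSet_Ioc _
    (Or.inr ((Measure.restrict_apply_le _ _).trans_lt measure_Ioc_lt_top).ne)

theorem integral_kappa_one_div_mul_mul_truncCpow (ha : ∀ k, m < k → a k = 0) {k : ℕ}
    (hk : 1 ≤ k) {ρ : ℂ} (hρ : r - 1/2 < ρ.re) :
    ∫ x in Set.Ioi 0, kappa a r (1 / (k * x)) * truncCpow (ρ - r - 1/2) x =
      (∑ j ∈ Icc 1 m, a j * (j : ℂ) ^ (-ρ)) / ((k : ℂ) ^ (ρ - r + 1/2) * (ρ - r + 1/2)) := by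
  have hwre : (ρ - r - 1/2 : ℂ).re = ρ.re - r - 1/2 := by simp
  have hw : -1 < (ρ - r - 1/2 : ℂ).re := by rw [hwre]; linarith
  set c : ℕ → ℂ := fun j => a j / (j : ℂ) ^ ((r : ℂ) - 1/2)
  calc ∫ x in Set.Ioi 0, kappa a r (1 / (k * x)) * truncCpow (ρ - r - 1/2) x
      = ∫ x in Set.Ioi 0, ∑ j ∈ Icc 1 m,
          (Set.Ioc 0 (1 / (j * k : ℝ))).indicator (fun _ => c j) x * truncCpow (ρ - r - 1/2) x := by
        refine setIntegral_congr_fun measurableSet_Ioi fun x hx => ?_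
        rw [kappa_one_div_mul_eq_sum_indicator ha hk hx, Finset.sum_mul]
    _ = ∑ j ∈ Icc 1 m, c j * ∫ x in Set.Ioc 0 (1 / (j * k : ℝ)), truncCpow (ρ - r - 1/2) x := by
        have hterm : ∀ j ∈ Icc 1 m, Integrable (fun x => (Set.Ioc 0 (1 / (j * k : ℝ))).indicator
            (fun _ => c j) x * truncCpow (ρ - r - 1/2) x) (volume.restrict (Set.Ioi 0)) :=
          fun j _ => (integrable_truncCpow hw).restrict.bdd_mul
            (measurable_const.indicator measurableSet_Ioc).aestronglyMeasurable
            (Eventually.of_forall fun x => norm_indicator_le_norm_self _ x)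
        rw [integral_finsetSum _ hterm]
        refine Finset.sum_congr rfl fun j _ => ?_
        rw [setIntegral_indicator_const_mul measurableSet_Ioc,
          Set.inter_eq_right.2 Set.Ioc_subset_Ioi_self]
    _ = ∑ j ∈ Icc 1 m, c j * (((1 / (j * k : ℝ) : ℝ) : ℂ) ^ (ρ - r + 1/2) / (ρ - r + 1/2)) := by
        refine Finset.sum_congr rfl fun j hj => ?_
        have hj : (1 : ℝ) ≤ j := by exact_mod_cast (Finset.mem_Icc.1 hj).1
        have hk : (1 : ℝ) ≤ k := by exact_mod_cast hk
        rw [setIntegral_Ioc_truncCpow hw (by positivity)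
          (div_le_one_of_le₀ (by nlinarith) (by positivity))]
        ring_nf
    _ = _ := by
        rw [Finset.sum_div]
        refine Finset.sum_congr rfl fun j hj => ?_
        have hj : (j : ℂ) ≠ 0 := Nat.cast_ne_zero.2 (by have := (Finset.mem_Icc.1 hj).1; omega)
        have hpow : (j : ℂ) ^ ((r : ℂ) - 1/2) * (j : ℂ) ^ (ρ - r + 1/2) = (j : ℂ) ^ ρ := by
          rw [← Complex.cpow_add _ _ hj]; ring_nf
        rw [ofReal_one_div_natCast_mul_cpow, Complex.cpow_neg, ← hpow]
        simp only [c]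
        field_simp

end Kappa

theorem baezDuarte_dist_lower_bound_of_zero_general (m : ℕ) (a : ℕ → ℂ)
    (ha : ∀ k, m < k → a k = 0) (r : ℝ) (ρ : ℂ)
    (hρ : (∑ k ∈ Finset.Icc 1 m, a k * (k : ℂ) ^ (-ρ)) = 0) (hre : r < ρ.re) :
    ∀ n : ℕ, 2 * (ρ.re - r) / ‖ρ - r + 1/2‖ ^ 2 ≤ baezDuarteDistSq a r n := by
  intro n
  have hwre : (ρ - r - 1/2 : ℂ).re = ρ.re - r - 1/2 := by simp
  have hw : -1 / 2 < (ρ - r - 1/2 : ℂ).re := by rw [hwre]; linarith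
  have hu : ρ - r - 1/2 + 1 = ρ - r + 1/2 := by ring
  have hu0 : 0 < ‖ρ - r + 1/2‖ := by
    refine lt_of_lt_of_le ?_ (Complex.re_le_norm _)
    rw [← hu, Complex.add_re, hwre, Complex.one_re]
    linarith
  refine le_ciInf fun b => ?_
  have hCS := sq_norm_integral_mul_le_of_orthogonal (μ := volume.restrict (Set.Ioi 0)) univ
    (φ := fun (k : Fin n) x => kappa a r (1 / (((k : ℕ) + 1 : ℕ) * x)))
    (memLp_indicator_const 2 (measurableSet_Ioo (a := (0 : ℝ)) (b := 1)) (1 : ℂ)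
      (Or.inr ((Measure.restrict_apply_le _ _).trans_lt measure_Ioo_lt_top).ne))
    (fun k _ => memLp_kappa_one_div_mul ha k.val.succ_pos) (memLp_truncCpow hw)
    (fun k _ => by rw [integral_kappa_one_div_mul_mul_truncCpow ha k.val.succ_pos
      (by linarith), hρ, zero_div]) b
  rw [setIntegral_indicator_Ioo_mul_truncCpow (by linarith), hu, integral_sq_norm_truncCpow hw,
    hwre, norm_div, norm_one, one_div_pow, mul_one_div,
    div_le_div_iff₀ (by positivity) (by linarith), one_mul] at hCS
  rw [div_le_iff₀ (by positivity)]
  linarith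

theorem baezDuarte_dist_lower_bound_of_zero (m : ℕ) (hm : 1 ≤ m) (a : ℕ → ℂ)
    (ha1 : a 1 ≠ 0) (ha : ∀ k, m < k → a k = 0) (r : ℝ) (ρ : ℂ)
    (hρ : (∑ k ∈ Finset.Icc 1 m, a k * (k : ℂ) ^ (-ρ)) = 0) (hre : r < ρ.re) :
    ∀ n : ℕ, 2 * (ρ.re - r) / ‖ρ - r + 1/2‖ ^ 2 ≤ baezDuarteDistSq a r n :=
  baezDuarte_dist_lower_bound_of_zero_general m a ha r ρ hρ hre
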